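/- arXiv:0804.3888 — 4 statements merged into one kernel-verified Lean document; each statement's English description precedes it below -/
import Mathlib

section
/- Let a = (a_0, a_1, ...) and b = (b_0, b_1, ...) be p-adic Witt vectors over a commutative ring A such that for every n at least one of a_n, b_n is zero. Then a +_W b = (a_0 + b_0, a_1 + b_1, a_2 + b_2, ...), i.e., the Witt vector sum of 'disjoint' Witt vectors is computed coordinatewise. -/
/-- Adding "disjoint" `p`-adic Witt vectors: if for every `n` at least one of `a_n`, `b_n`
is zero, then the Witt sum is computed coordinatewise. -/
theorem stmt6 (p : ℕ) [Fact p.Prime] (A : Type) [CommRing A] (a b : WittVector p A)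
    (h : ∀ n : ℕ, a.coeff n = 0 ∨ b.coeff n = 0) :
    ∀ n : ℕ, (a + b).coeff n = a.coeff n + b.coeff n :=
  fun n => WittVector.coeff_add_of_disjoint n a b h
end

section
/- Let k be a perfect field of characteristic p. Define v: W_p(k) → ℕ ∪ {∞} by v(0) = ∞ and v(x_0, x_1, ...) = n iff x_n is the first nonzero coordinate. Then v is a valuation making W_p(k) a complete discrete valuation ring of characteristic zero with maximal ideal generated by p and residue field k. -/
/-! The valuation is the `p`-adic one, `v = emultiplicity p`. Over a perfect ring
`x = Vⁿ(y)` exactly when `x = pⁿ · F⁻ⁿ(y)` (as `V ∘ F = p`), so `pⁿ ∣ x` iff the first `n`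
Witt coordinates of `x` vanish; this turns `v x = n` into the coordinate condition, while
multiplicativity and the ultrametric inequality are those of the multiplicity of the prime `p`. -/

namespace WittVector

variable {p : ℕ} [hp : Fact p.Prime] {k : Type*}

theorem ghostComponent_zero_eq_constantCoeff [CommRing k] :
    (ghostComponent 0 : WittVector p k →+* k) = constantCoeff := by
  ext x
  simp [ghostComponent_apply, wittPolynomial_zero]

theorem charZero_of_field [Field k] [CharP k p] : CharZero (WittVector p k) := by
  refine charZero_of_inj_zero fun n hn => ?_
  by_contra hn0
  obtain ⟨a, m, hpm, rfl⟩ := Nat.exists_eq_pow_mul_and_not_dvd hn0 p hp.out.ne_one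
  have hm : IsUnit (m : WittVector p k) :=
    isUnit_of_coeff_zero_ne_zero _ (by simpa [← constantCoeff_apply, CharP.cast_eq_zero_iff k p])
  have hpa : (p : WittVector p k) ^ a ≠ 0 := fun h => by
    simpa [h] using coeff_p_pow (R := k) (p := p) a
  push_cast at hn
  exact hpa (hm.mul_left_eq_zero.mp hn)

theorem p_pow_dvd_iff [CommRing k] [CharP k p] [PerfectRing k p] (x : WittVector p k) (n : ℕ) :
    (p : WittVector p k) ^ n ∣ x ↔ ∀ m < n, x.coeff m = 0 := by
  rw [← Ideal.mem_span_singleton, mem_span_p_pow_iff_le_coeff_eq_zero]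

section PerfectField

variable [Field k] [CharP k p] [PerfectRing k p]

theorem emultiplicity_p_eq_top_iff (x : WittVector p k) :
    emultiplicity (p : WittVector p k) x = ⊤ ↔ x = 0 := by
  refine ⟨fun h => ?_, fun h => h ▸ emultiplicity_zero _⟩
  by_contra hx
  exact (emultiplicity_lt_top.mpr (.of_prime_left (irreducible p).prime hx)).ne h

theorem emultiplicity_p_eq_coe_iff (x : WittVector p k) (n : ℕ) :
    emultiplicity (p : WittVector p k) x = n ↔ x.coeff n ≠ 0 ∧ ∀ m < n, x.coeff m = 0 := by
  simp only [emultiplicity_eq_coe, p_pow_dvd_iff, Nat.lt_succ_iff_lt_or_eq, or_imp, forall_and,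
    forall_eq]
  tauto

end PerfectField

end WittVector

open WittVector in
/-- Over a perfect field `k` of characteristic `p`, the function `v` with `v 0 = ∞` and
`v x = n` iff `x_n` is the first nonzero coordinate is a valuation making `W_p(k)` a
complete discrete valuation ring of characteristic zero with maximal ideal generated by
`p` and residue field `k`. -/
theorem stmt11 (p : ℕ) [Fact p.Prime] (k : Type) [Field k] [CharP k p]
    (hperf : Function.Bijective fun a : k => a ^ p) :
    ∃ v : WittVector p k → ℕ∞,
      (∀ x : WittVector p k, v x = ⊤ ↔ x = 0) ∧
      (∀ (x : WittVector p k) (n : ℕ),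
        v x = (n : ℕ∞) ↔ x.coeff n ≠ 0 ∧ ∀ m < n, x.coeff m = 0) ∧
      (∀ x y : WittVector p k, v (x * y) = v x + v y) ∧
      (∀ x y : WittVector p k, min (v x) (v y) ≤ v (x + y)) ∧
      CharZero (WittVector p k) ∧
      (∃ hd : IsDomain (WittVector p k),
        @IsDiscreteValuationRing (WittVector p k) _ hd) ∧
      IsAdicComplete (Ideal.span {(p : WittVector p k)}) (WittVector p k) ∧
      Function.Surjective (WittVector.ghostComponent 0 : WittVector p k →+* k) ∧
      RingHom.ker (WittVector.ghostComponent 0 : WittVector p k →+* k) =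
        Ideal.span {(p : WittVector p k)} ∧
      ∃ h : IsLocalRing (WittVector p k),
        @IsLocalRing.maximalIdeal (WittVector p k) _ h =
          Ideal.span {(p : WittVector p k)} := by
  have : PerfectRing k p := ⟨hperf⟩
  have hirr : Irreducible (p : WittVector p k) := irreducible p
  refine ⟨emultiplicity (p : WittVector p k), emultiplicity_p_eq_top_iff,
    emultiplicity_p_eq_coe_iff, fun _ _ => emultiplicity_mul hirr.prime,
    fun _ _ => min_le_emultiplicity_add, charZero_of_field,
    ⟨inferInstance, isDiscreteValuationRing⟩, inferInstance, ?_, ?_, inferInstance,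
    hirr.maximalIdeal_eq⟩
  · rw [ghostComponent_zero_eq_constantCoeff]
    exact constantCoeff_surjective p
  · rw [ghostComponent_zero_eq_constantCoeff, ker_constantCoeff]
end

section
/- For any commutative ring A and x, y ∈ A, the multiplication on the big Witt vectors, viewed as power series with constant term 1 under the rule (1 - ξt)^{-1} * (1 - ηt)^{-1} = (1 - ξηt)^{-1} extended by distributivity over power series multiplication, satisfies: on ghost components, s_n(f * g) = s_n(f) · s_n(g), where s_n(f) is the coefficient of t^n in t·(d/dt)log f(t). -/
/-!
The ghost series `t f'/f` turns products of power series into sums and commutes with ring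
homomorphisms. On products of geometric series the Witt product is, by distributivity,
`∏ (1 - x_i t)⁻¹ * ∏ (1 - y_j t)⁻¹ = ∏_{i,j} (1 - x_i y_j t)⁻¹`, whose `n`-th ghost component
`∑_{i,j} (x_i y_j)^n = (∑ x_i^n)(∑ y_j^n)` is the product of those of the factors.

The general case follows by the splitting principle. Over `U = ℤ[a_i, b_j]` take the universal
`f, g` with `f⁻¹ = 1 + ∑ a_i t^(i+1)`, `g⁻¹ = 1 + ∑ b_j t^(j+1)`; every pair of series with
constant term `1` is an image of `(f, g)`. Substituting the elementary symmetric polynomials in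
`k` variables for the `a_i` and in `k` further variables for the `b_j` turns `f` and `g` into
products of geometric series, and by the fundamental theorem of symmetric polynomials a
polynomial in `U` killed by these substitutions for all `k` vanishes.
-/

namespace PowerSeries

variable {A B : Type*} [CommRing A] [CommRing B]

theorem mul_invOfUnit_one {f : A⟦X⟧} (hf : constantCoeff f = 1) : f * invOfUnit f 1 = 1 :=
  mul_invOfUnit f 1 (by simp [hf])

theorem invOfUnit_one_eq_of_mul_eq_one {f g : A⟦X⟧} (hf : constantCoeff f = 1)
    (h : f * g = 1) : invOfUnit f 1 = g :=
  left_inv_eq_right_inv (invOfUnit_mul f 1 (by simp [hf])) h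

theorem invOfUnit_one_mul_distrib {f g : A⟦X⟧} (hf : constantCoeff f = 1)
    (hg : constantCoeff g = 1) : invOfUnit (f * g) 1 = invOfUnit f 1 * invOfUnit g 1 := by
  refine invOfUnit_one_eq_of_mul_eq_one (by simp [hf, hg]) ?_
  rw [mul_mul_mul_comm, mul_invOfUnit_one hf, mul_invOfUnit_one hg, one_mul]

theorem map_invOfUnit_one (φ : A →+* B) {f : A⟦X⟧} (hf : constantCoeff f = 1) :
    map φ (invOfUnit f 1) = invOfUnit (map φ f) 1 :=
  (invOfUnit_one_eq_of_mul_eq_one (by simp [← coeff_zero_eq_constantCoeff_apply, hf])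
    (by rw [← map_mul, mul_invOfUnit_one hf, map_one])).symm

/-- `t f'(t) / f(t)`, whose `n`-th coefficient is the ghost component `s_n(f)`. -/
noncomputable def ghostSeries (f : A⟦X⟧) : A⟦X⟧ :=
  mk (fun m => (m : A) * coeff m f) * invOfUnit f 1

theorem mk_natCast_mul_coeff (f : A⟦X⟧) :
    mk (fun m => (m : A) * coeff m f) = X * d⁄dX A f := by
  ext (_ | n)
  · simp
  · rw [coeff_mk, coeff_succ_X_mul, coeff_derivative]
    push_cast
    ring

theorem ghostSeries_one : ghostSeries (1 : A⟦X⟧) = 0 := by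
  rw [ghostSeries, mk_natCast_mul_coeff, Derivation.map_one_eq_zero, mul_zero, zero_mul]

theorem ghostSeries_mul {f g : A⟦X⟧} (hf : constantCoeff f = 1) (hg : constantCoeff g = 1) :
    ghostSeries (f * g) = ghostSeries f + ghostSeries g := by
  simp only [ghostSeries, mk_natCast_mul_coeff, Derivation.leibniz, smul_eq_mul,
    invOfUnit_one_mul_distrib hf hg]
  linear_combination (X * d⁄dX A g * invOfUnit g 1) * mul_invOfUnit_one hf +
    (X * d⁄dX A f * invOfUnit f 1) * mul_invOfUnit_one hg


theorem ghostSeries_prod {ι : Type*} (s : Finset ι) {f : ι → A⟦X⟧}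
    (hf : ∀ i ∈ s, constantCoeff (f i) = 1) :
    ghostSeries (∏ i ∈ s, f i) = ∑ i ∈ s, ghostSeries (f i) := by
  classical
  induction s using Finset.induction_on with
  | empty => exact ghostSeries_one
  | insert a s ha ih =>
    rw [Finset.forall_mem_insert] at hf
    rw [Finset.prod_insert ha, Finset.sum_insert ha,
      ghostSeries_mul hf.1 (by simp [Finset.prod_eq_one hf.2]), ih hf.2]

theorem map_ghostSeries (φ : A →+* B) {f : A⟦X⟧} (hf : constantCoeff f = 1) :
    map φ (ghostSeries f) = ghostSeries (map φ f) := by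
  rw [ghostSeries, ghostSeries, map_mul, map_invOfUnit_one φ hf]
  congr 1
  ext m
  simp

theorem coeff_zero_ghostSeries (f : A⟦X⟧) : coeff 0 (ghostSeries f) = 0 := by
  simp [ghostSeries, coeff_zero_eq_constantCoeff]

noncomputable def geomSeries (x : A) : A⟦X⟧ := mk fun m => x ^ m

theorem constantCoeff_geomSeries (x : A) : constantCoeff (geomSeries x) = 1 := by
  simp [geomSeries]

theorem geomSeries_mul_one_sub (x : A) : geomSeries x * (1 - C x * X) = 1 := by
  have h := congrArg (rescale x) (mk_one_mul_one_sub_eq_one A)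
  rw [map_mul, map_sub, map_one, rescale_X, rescale_mk] at h
  simpa [geomSeries] using h

theorem coeff_succ_ghostSeries_geomSeries (x : A) (n : ℕ) :
    coeff (n + 1) (ghostSeries (geomSeries x)) = x ^ (n + 1) := by
  rw [ghostSeries, invOfUnit_one_eq_of_mul_eq_one (constantCoeff_geomSeries x)
    (geomSeries_mul_one_sub x), mul_sub, mul_one, ← mul_assoc, map_sub, mul_comm _ (C x),
    mul_assoc, coeff_C_mul, coeff_succ_mul_X]
  simp only [coeff_mk, geomSeries]
  push_cast
  ring

theorem coeff_prod_one_add_C_mul_X {ι : Type*} (s : Finset ι) (x : ι → A) (m : ℕ) :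
    coeff m (∏ i ∈ s, (1 + C (x i) * X)) = ∑ t ∈ s.powersetCard m, ∏ i ∈ t, x i := by
  classical
  simp_rw [Finset.prod_one_add, Finset.prod_mul_distrib, Finset.prod_const, ← map_prod,
    map_sum, coeff_C_mul_X_pow, Finset.powersetCard_eq_filter, Finset.sum_filter, eq_comm]

theorem coeff_succ_ghostSeries_prod_geomSeries {ι : Type*} (s : Finset ι) (x : ι → A)
    (n : ℕ) :
    coeff (n + 1) (ghostSeries (∏ i ∈ s, geomSeries (x i))) = ∑ i ∈ s, x i ^ (n + 1) := by
  simp only [ghostSeries_prod s fun i _ => constantCoeff_geomSeries (x i), map_sum,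
    coeff_succ_ghostSeries_geomSeries]

theorem one_add_X_mul_mk_coeff_succ {f : A⟦X⟧} (hf : constantCoeff f = 1) :
    1 + X * mk (fun i => coeff (i + 1) f) = f := by
  conv_rhs => rw [eq_X_mul_shift_add_const f, hf, map_one, add_comm]

/-- Specified by its reciprocal `1 + X * mk a`, so that substituting elementary symmetric
polynomials for the `a i` yields a product of `geomSeries`. -/
noncomputable def ofInvCoeffs (a : ℕ → A) : A⟦X⟧ := invOfUnit (1 + X * mk a) 1

theorem constantCoeff_ofInvCoeffs (a : ℕ → A) : constantCoeff (ofInvCoeffs a) = 1 := by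
  simp [ofInvCoeffs, constantCoeff_invOfUnit]

theorem map_ofInvCoeffs (φ : A →+* B) (a : ℕ → A) :
    map φ (ofInvCoeffs a) = ofInvCoeffs (φ ∘ a) := by
  rw [ofInvCoeffs, map_invOfUnit_one φ (by simp)]
  congr 1
  ext (_ | i) <;> simp [coeff_succ_X_mul]

theorem ofInvCoeffs_coeff_invOfUnit {f : A⟦X⟧} (hf : constantCoeff f = 1) :
    ofInvCoeffs (fun i => coeff (i + 1) (invOfUnit f 1)) = f := by
  have hinv : constantCoeff (invOfUnit f 1) = 1 := by simp [constantCoeff_invOfUnit]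
  rw [ofInvCoeffs, one_add_X_mul_mk_coeff_succ hinv]
  exact invOfUnit_one_eq_of_mul_eq_one hinv (invOfUnit_mul f 1 (by simp [hf]))

theorem ofInvCoeffs_sum_prod_powersetCard {ι : Type*} [Fintype ι] (x : ι → A) :
    ofInvCoeffs (fun i => ∑ t ∈ Finset.univ.powersetCard (i + 1), ∏ j ∈ t, x j) =
      ∏ j, geomSeries (-x j) := by
  have hprod : constantCoeff (∏ j, (1 + C (x j) * X)) = 1 := by
    simp [Finset.prod_eq_one]
  simp_rw [ofInvCoeffs, ← coeff_prod_one_add_C_mul_X, one_add_X_mul_mk_coeff_succ hprod]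
  refine invOfUnit_one_eq_of_mul_eq_one hprod ?_
  rw [← Finset.prod_mul_distrib]
  refine Finset.prod_eq_one fun j _ => ?_
  simpa [mul_comm] using geomSeries_mul_one_sub (-x j)

end PowerSeries

namespace MvPolynomial

variable (R : Type*) [CommRing R]

theorem aeval_esymm_injective (k : ℕ) :
    Function.Injective
      (aeval fun i : Fin k => esymm (Fin k) R (i + 1) :
        MvPolynomial (Fin k) R →ₐ[R] MvPolynomial (Fin k) R) := fun p q h =>
  esymmAlgHom_fin_injective R le_rfl (Subtype.ext (by simpa only [esymmAlgHom_apply] using h))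

noncomputable def esymmSubst (k : ℕ) :
    MvPolynomial (ℕ ⊕ ℕ) R →ₐ[R] MvPolynomial (Fin k ⊕ Fin k) R :=
  aeval (Sum.elim (fun i => rename Sum.inl (esymm (Fin k) R (i + 1)))
    (fun i => rename Sum.inr (esymm (Fin k) R (i + 1))))

/-- Conjugated by `sumAlgEquiv`, this map is the elementary symmetric substitution in the
coefficients followed by the one in the outer variables, both injective. -/
theorem esymmSubst_comp_rename_injective (k : ℕ) :
    Function.Injective
      ((esymmSubst R k).comp (rename (Sum.map (Fin.val (n := k)) (Fin.val (n := k))))) := by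
  let Ψ : MvPolynomial (Fin k) (MvPolynomial (Fin k) R) →ₐ[R]
      MvPolynomial (Fin k) (MvPolynomial (Fin k) R) :=
    ((aeval fun i : Fin k => esymm (Fin k) (MvPolynomial (Fin k) R) (i + 1)).restrictScalars
      R).comp (mapAlgHom (aeval fun i : Fin k => esymm (Fin k) R (i + 1)))
  have hΨ : Function.Injective Ψ := by
    simp only [Ψ, AlgHom.coe_comp, AlgHom.coe_restrictScalars']
    exact (aeval_esymm_injective (MvPolynomial (Fin k) R) k).comp
      (map_injective _ (aeval_esymm_injective R k))
  have hrename_inl (p : MvPolynomial (Fin k) R) :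
      sumAlgEquiv R (Fin k) (Fin k) (rename Sum.inl p) =
        map (algebraMap R (MvPolynomial (Fin k) R)) p :=
    AlgHom.congr_fun (sumAlgEquiv_comp_rename_inl R (Fin k) (Fin k)) p
  have hrename_inr (p : MvPolynomial (Fin k) R) :
      sumAlgEquiv R (Fin k) (Fin k) (rename Sum.inr p) = C p :=
    AlgHom.congr_fun (sumAlgEquiv_comp_rename_inr R (Fin k) (Fin k)) p
  have hconj : (sumAlgEquiv R (Fin k) (Fin k)).toAlgHom.comp
      ((esymmSubst R k).comp (rename (Sum.map (Fin.val (n := k)) (Fin.val (n := k))))) =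
      Ψ.comp (sumAlgEquiv R (Fin k) (Fin k)).toAlgHom := by
    apply algHom_ext
    rintro (i | i)
    · simp [esymmSubst, Ψ, hrename_inl, map_esymm]
    · simp [esymmSubst, Ψ, hrename_inr, algebraMap_eq, bind₁_X_right]
  refine Function.Injective.of_comp (f := (sumAlgEquiv R (Fin k) (Fin k)).toAlgHom) ?_
  rw [← AlgHom.coe_comp, hconj, AlgHom.coe_comp]
  exact hΨ.comp (sumAlgEquiv R (Fin k) (Fin k)).injective

theorem exists_rename_finVal_eq (p : MvPolynomial (ℕ ⊕ ℕ) R) :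
    ∃ (k : ℕ) (q : MvPolynomial (Fin k ⊕ Fin k) R),
      rename (Sum.map (Fin.val (n := k)) (Fin.val (n := k))) q = p := by
  refine ⟨p.vars.sup (Sum.elim id id) + 1, exists_rename_eq_of_vars_subset_range p _
    (Sum.map_injective.mpr ⟨Fin.val_injective, Fin.val_injective⟩) ?_⟩
  intro v hv
  have hle : Sum.elim id id v < p.vars.sup (Sum.elim id id) + 1 :=
    Nat.lt_succ_of_le (Finset.le_sup (f := Sum.elim id id) hv)
  rcases v with i | i
  · exact ⟨Sum.inl ⟨i, hle⟩, rfl⟩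
  · exact ⟨Sum.inr ⟨i, hle⟩, rfl⟩

theorem eq_zero_of_forall_esymmSubst_eq_zero {p : MvPolynomial (ℕ ⊕ ℕ) R}
    (h : ∀ k, esymmSubst R k p = 0) : p = 0 := by
  obtain ⟨k, q, rfl⟩ := exists_rename_finVal_eq R p
  have hq : q = 0 := esymmSubst_comp_rename_injective R k (by simpa using h k)
  rw [hq, map_zero]

theorem esymmSubst_X_inl (k i : ℕ) :
    esymmSubst R k (X (Sum.inl i)) =
      ∑ t ∈ Finset.univ.powersetCard (i + 1), ∏ j ∈ t, X (Sum.inl j) := by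
  simp [esymmSubst, esymm, map_sum, map_prod]

theorem esymmSubst_X_inr (k i : ℕ) :
    esymmSubst R k (X (Sum.inr i)) =
      ∑ t ∈ Finset.univ.powersetCard (i + 1), ∏ j ∈ t, X (Sum.inr j) := by
  simp [esymmSubst, esymm, map_sum, map_prod]

end MvPolynomial

open PowerSeries

theorem eq_of_eq_on_prod_geomSeries {F G : ∀ (A : Type) [CommRing A], A⟦X⟧ → A⟦X⟧ → A}
    (hF : ∀ (A B : Type) [CommRing A] [CommRing B] (φ : A →+* B) (f g : A⟦X⟧),
      constantCoeff f = 1 → constantCoeff g = 1 → φ (F A f g) = F B (map φ f) (map φ g))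
    (hG : ∀ (A B : Type) [CommRing A] [CommRing B] (φ : A →+* B) (f g : A⟦X⟧),
      constantCoeff f = 1 → constantCoeff g = 1 → φ (G A f g) = G B (map φ f) (map φ g))
    (hsplit : ∀ (A : Type) [CommRing A] (k : ℕ) (x y : Fin k → A),
      F A (∏ i, geomSeries (x i)) (∏ j, geomSeries (y j)) =
        G A (∏ i, geomSeries (x i)) (∏ j, geomSeries (y j)))
    (A : Type) [CommRing A] {f g : A⟦X⟧} (hf : constantCoeff f = 1)
    (hg : constantCoeff g = 1) :
    F A f g = G A f g := by
  let U := MvPolynomial (ℕ ⊕ ℕ) ℤ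
  let fU : U⟦X⟧ := ofInvCoeffs fun i => MvPolynomial.X (Sum.inl i)
  let gU : U⟦X⟧ := ofInvCoeffs fun i => MvPolynomial.X (Sum.inr i)
  have hfU : constantCoeff fU = 1 := constantCoeff_ofInvCoeffs _
  have hgU : constantCoeff gU = 1 := constantCoeff_ofInvCoeffs _
  have huniv : F U fU gU = G U fU gU := by
    rw [← sub_eq_zero]
    refine MvPolynomial.eq_zero_of_forall_esymmSubst_eq_zero ℤ fun k => ?_
    let φ : U →+* MvPolynomial (Fin k ⊕ Fin k) ℤ := MvPolynomial.esymmSubst ℤ k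
    have hφfU : map φ fU = ∏ i, geomSeries (-MvPolynomial.X (Sum.inl i)) := by
      rw [map_ofInvCoeffs, ← ofInvCoeffs_sum_prod_powersetCard]
      exact congrArg ofInvCoeffs (funext (MvPolynomial.esymmSubst_X_inl ℤ k))
    have hφgU : map φ gU = ∏ i, geomSeries (-MvPolynomial.X (Sum.inr i)) := by
      rw [map_ofInvCoeffs, ← ofInvCoeffs_sum_prod_powersetCard]
      exact congrArg ofInvCoeffs (funext (MvPolynomial.esymmSubst_X_inr ℤ k))
    change φ (F U fU gU - G U fU gU) = 0
    rw [map_sub, hF U _ φ fU gU hfU hgU, hG U _ φ fU gU hfU hgU, hφfU, hφgU, hsplit, sub_self]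
  let ψ : U →+* A := MvPolynomial.eval₂Hom (Int.castRingHom A)
    (Sum.elim (fun i => coeff (i + 1) (invOfUnit f 1)) (fun i => coeff (i + 1) (invOfUnit g 1)))
  have hψfU : map ψ fU = f := by
    rw [map_ofInvCoeffs, ← ofInvCoeffs_coeff_invOfUnit hf]
    congr 1
    funext i
    exact MvPolynomial.eval₂Hom_X' _ _ _
  have hψgU : map ψ gU = g := by
    rw [map_ofInvCoeffs, ← ofInvCoeffs_coeff_invOfUnit hg]
    congr 1
    funext i
    exact MvPolynomial.eval₂Hom_X' _ _ _
  calc F A f g = ψ (F U fU gU) := by rw [hF U A ψ fU gU hfU hgU, hψfU, hψgU]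
    _ = ψ (G U fU gU) := by rw [huniv]
    _ = G A f g := by rw [hG U A ψ fU gU hfU hgU, hψfU, hψgU]

structure IsWittMul (mul : ∀ (A : Type) [CommRing A], A⟦X⟧ → A⟦X⟧ → A⟦X⟧) : Prop where
  constantCoeff_mul : ∀ (A : Type) [CommRing A] (f g : A⟦X⟧),
    constantCoeff f = 1 → constantCoeff g = 1 → constantCoeff (mul A f g) = 1
  left_distrib : ∀ (A : Type) [CommRing A] (f g h : A⟦X⟧),
    constantCoeff f = 1 → constantCoeff g = 1 → constantCoeff h = 1 →
    mul A f (g * h) = mul A f g * mul A f h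
  right_distrib : ∀ (A : Type) [CommRing A] (f g h : A⟦X⟧),
    constantCoeff f = 1 → constantCoeff g = 1 → constantCoeff h = 1 →
    mul A (f * g) h = mul A f h * mul A g h
  geomSeries_mul_geomSeries : ∀ (A : Type) [CommRing A] (x y : A),
    mul A (geomSeries x) (geomSeries y) = geomSeries (x * y)

namespace IsWittMul

variable {mul : ∀ (A : Type) [CommRing A], A⟦X⟧ → A⟦X⟧ → A⟦X⟧} {A : Type} [CommRing A]

theorem mul_one_right (hW : IsWittMul mul) {f : A⟦X⟧} (hf : constantCoeff f = 1) :
    mul A f 1 = 1 := by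
  have hunit : IsUnit (mul A f 1) :=
    isUnit_iff_constantCoeff.mpr (by simp [hW.constantCoeff_mul A f 1 hf (map_one _)])
  have h := hW.left_distrib A f 1 1 hf (map_one _) (map_one _)
  rw [mul_one] at h
  exact hunit.mul_eq_left.mp h.symm

theorem mul_one_left (hW : IsWittMul mul) {f : A⟦X⟧} (hf : constantCoeff f = 1) :
    mul A 1 f = 1 := by
  have hunit : IsUnit (mul A 1 f) :=
    isUnit_iff_constantCoeff.mpr (by simp [hW.constantCoeff_mul A 1 f (map_one _) hf])
  have h := hW.right_distrib A 1 1 f (map_one _) (map_one _) hf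
  rw [mul_one] at h
  exact hunit.mul_eq_left.mp h.symm

theorem mul_prod_right (hW : IsWittMul mul) {ι : Type*} (s : Finset ι) {f : A⟦X⟧}
    {g : ι → A⟦X⟧} (hf : constantCoeff f = 1) (hg : ∀ i ∈ s, constantCoeff (g i) = 1) :
    mul A f (∏ i ∈ s, g i) = ∏ i ∈ s, mul A f (g i) := by
  classical
  induction s using Finset.induction_on with
  | empty => exact hW.mul_one_right hf
  | insert a s ha ih =>
    rw [Finset.forall_mem_insert] at hg
    rw [Finset.prod_insert ha, Finset.prod_insert ha,
      hW.left_distrib A f _ _ hf hg.1 (by simp [Finset.prod_eq_one hg.2]), ih hg.2]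

theorem mul_prod_left (hW : IsWittMul mul) {ι : Type*} (s : Finset ι) {f : ι → A⟦X⟧}
    {g : A⟦X⟧} (hf : ∀ i ∈ s, constantCoeff (f i) = 1) (hg : constantCoeff g = 1) :
    mul A (∏ i ∈ s, f i) g = ∏ i ∈ s, mul A (f i) g := by
  classical
  induction s using Finset.induction_on with
  | empty => exact hW.mul_one_left hg
  | insert a s ha ih =>
    rw [Finset.forall_mem_insert] at hf
    rw [Finset.prod_insert ha, Finset.prod_insert ha,
      hW.right_distrib A _ _ g hf.1 (by simp [Finset.prod_eq_one hf.2]) hg, ih hf.2]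

theorem mul_prod_geomSeries (hW : IsWittMul mul) {ι κ : Type*} (s : Finset ι) (t : Finset κ)
    (x : ι → A) (y : κ → A) :
    mul A (∏ i ∈ s, geomSeries (x i)) (∏ j ∈ t, geomSeries (y j)) =
      ∏ p ∈ s ×ˢ t, geomSeries (x p.1 * y p.2) := by
  rw [hW.mul_prod_left s (fun i _ => constantCoeff_geomSeries (x i))
    (by simp [Finset.prod_eq_one fun j _ => constantCoeff_geomSeries (y j)]), Finset.prod_product]
  refine Finset.prod_congr rfl fun i _ => ?_
  rw [hW.mul_prod_right t (constantCoeff_geomSeries (x i))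
    (fun j _ => constantCoeff_geomSeries (y j))]
  exact Finset.prod_congr rfl fun j _ => hW.geomSeries_mul_geomSeries A (x i) (y j)

theorem coeff_ghostSeries_mul_prod_geomSeries (hW : IsWittMul mul) {ι κ : Type*}
    (s : Finset ι) (t : Finset κ) (x : ι → A) (y : κ → A) (n : ℕ) :
    coeff n (ghostSeries (mul A (∏ i ∈ s, geomSeries (x i)) (∏ j ∈ t, geomSeries (y j)))) =
      coeff n (ghostSeries (∏ i ∈ s, geomSeries (x i))) *
        coeff n (ghostSeries (∏ j ∈ t, geomSeries (y j))) := by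
  cases n with
  | zero => simp only [coeff_zero_ghostSeries, mul_zero]
  | succ n =>
    simp only [hW.mul_prod_geomSeries, coeff_succ_ghostSeries_prod_geomSeries,
      Finset.sum_mul_sum, Finset.sum_product, mul_pow]

end IsWittMul

/-- Any functorial multiplication on power series with constant term 1 that distributes
over power-series multiplication (= Witt addition) and satisfies
`(1-xt)⁻¹ * (1-yt)⁻¹ = (1-xyt)⁻¹` is, on ghost components
(`s_n(f) = ` the `n`-th coefficient of `t·f'(t)/f(t)`), given by componentwise
multiplication: `s_n(f * g) = s_n(f) · s_n(g)`. -/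
theorem stmt13
    (mul : ∀ (A : Type) [CommRing A], PowerSeries A → PowerSeries A → PowerSeries A)
    (hone : ∀ (A : Type) [CommRing A] (f g : PowerSeries A),
      PowerSeries.constantCoeff f = 1 → PowerSeries.constantCoeff g = 1 →
      PowerSeries.constantCoeff (mul A f g) = 1)
    (hfunc : ∀ (A B : Type) [CommRing A] [CommRing B] (φ : A →+* B) (f g : PowerSeries A),
      PowerSeries.map φ (mul A f g) = mul B (PowerSeries.map φ f) (PowerSeries.map φ g))
    (hdistl : ∀ (A : Type) [CommRing A] (f g h : PowerSeries A),
      PowerSeries.constantCoeff f = 1 → PowerSeries.constantCoeff g = 1 →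
      PowerSeries.constantCoeff h = 1 → mul A f (g * h) = mul A f g * mul A f h)
    (hdistr : ∀ (A : Type) [CommRing A] (f g h : PowerSeries A),
      PowerSeries.constantCoeff f = 1 → PowerSeries.constantCoeff g = 1 →
      PowerSeries.constantCoeff h = 1 → mul A (f * g) h = mul A f h * mul A g h)
    (hlin : ∀ (A : Type) [CommRing A] (x y : A),
      mul A (PowerSeries.mk fun m => x ^ m) (PowerSeries.mk fun m => y ^ m) =
        PowerSeries.mk fun m => (x * y) ^ m)
    (A : Type) [CommRing A] (f g : PowerSeries A)
    (hf : PowerSeries.constantCoeff f = 1) (hg : PowerSeries.constantCoeff g = 1) :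
    ∀ n : ℕ,
      PowerSeries.coeff n
          ((PowerSeries.mk fun m => (m : A) * PowerSeries.coeff m (mul A f g)) *
            PowerSeries.invOfUnit (mul A f g) 1) =
        PowerSeries.coeff n
            ((PowerSeries.mk fun m => (m : A) * PowerSeries.coeff m f) *
              PowerSeries.invOfUnit f 1) *
          PowerSeries.coeff n
            ((PowerSeries.mk fun m => (m : A) * PowerSeries.coeff m g) *
              PowerSeries.invOfUnit g 1) := by
  have hW : IsWittMul mul := ⟨hone, hdistl, hdistr, hlin⟩
  intro n
  exact eq_of_eq_on_prod_geomSeries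
    (F := fun A _ f g => coeff n (ghostSeries (mul A f g)))
    (G := fun A _ f g => coeff n (ghostSeries f) * coeff n (ghostSeries g))
    (fun A B _ _ φ f g hf hg => by
      rw [← coeff_map, map_ghostSeries φ (hone A f g hf hg), hfunc])
    (fun A B _ _ φ f g hf hg => by
      rw [map_mul, ← coeff_map, ← coeff_map, map_ghostSeries φ hf, map_ghostSeries φ hg])
    (fun A _ k x y => hW.coeff_ghostSeries_mul_prod_geomSeries _ _ x y n) A hf hg
end

section
/- A sequence of integers (b_1, b_2, ...) lies in the image of the ghost map w: W(ℤ) → ℤ^ℕ if and only if Σ_{d|n} μ(d) b_{n/d} ≡ 0 (mod n) for all n ≥ 1, where μ is the Möbius function. Equivalently, if and only if Σ_{i=1}^{n} b_{(i,n)} ≡ 0 (mod n) for all n, where (i,n) denotes the gcd. -/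
/-!
Write `c = μ * b` for the Möbius inverse of `b`. For a ghost vector `b = w(x)` one finds
`c_n = Σ_{e ∣ n} e · N(x_e, n/e)` with `N(a, m) = Σ_{d ∣ m} μ(d) a^{m/d}`, and the necklace
congruence `m ∣ N(a, m)` makes every term divisible by `n`. The congruence is checked one prime
power `p^{k+1} ∣ m` at a time: pairing each `d` prime to `p` with `p d` leaves differences
`a^{p^{k+1} t} - a^{p^k t}`, which `p^{k+1}` divides by Fermat's little theorem lifted along `p`.

Conversely, if `n ∣ c_n` for all `n`, solve the ghost equations recursively. In degree `n` the new
unknown enters as `n x_n`, and since `b` and `w(x)` already agree on the proper divisors of `n`,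
the remaining discrepancy `b_n - w_n(x)` equals `c_n - (μ * w(x))_n`, a multiple of `n`.

Finally `Σ_{i ≤ n} b_{(i,n)} = Σ_{d ∣ n} c_d · #{i ≤ n : d ∣ i} = Σ_{d ∣ n} (n/d) c_d`, and
`n ∣ c_n` for all `n` iff `n ∣ Σ_{d ∣ n} (n/d) c_d` for all `n`, by strong induction.
-/
open Finset ArithmeticFunction
open scoped ArithmeticFunction.Moebius

theorem Nat.mem_divisors_and_mem_divisors_div {n d e : ℕ} :
    d ∈ n.divisors ∧ e ∈ (n / d).divisors ↔ d * e ∣ n ∧ n ≠ 0 := by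
  simp only [Nat.mem_divisors]
  constructor
  · rintro ⟨⟨hd, hn⟩, he, -⟩
    exact ⟨(Nat.dvd_div_iff_mul_dvd hd).mp he, hn⟩
  · rintro ⟨hde, hn⟩
    have hd : d ∣ n := (Nat.dvd_mul_right d e).trans hde
    exact ⟨⟨hd, hn⟩, (Nat.dvd_div_iff_mul_dvd hd).mpr hde,
      (Nat.div_ne_zero_iff_of_dvd hd).mpr ⟨hn, ne_zero_of_dvd_ne_zero hn hd⟩⟩

theorem Nat.sum_divisors_sum_divisors_div_comm {M : Type*} [AddCommMonoid M] (n : ℕ)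
    (f : ℕ → ℕ → M) :
    ∑ d ∈ n.divisors, ∑ e ∈ (n / d).divisors, f d e =
      ∑ e ∈ n.divisors, ∑ d ∈ (n / e).divisors, f d e :=
  sum_comm' fun d e => by
    rw [Nat.mem_divisors_and_mem_divisors_div, and_comm (a := d ∈ _),
      Nat.mem_divisors_and_mem_divisors_div, mul_comm]

theorem Int.natCast_dvd_mul_of_dvd_of_dvd_div {n d : ℕ} {a b : ℤ} (hd : d ∣ n)
    (ha : (d : ℤ) ∣ a) (hb : ((n / d : ℕ) : ℤ) ∣ b) : (n : ℤ) ∣ a * b := by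
  have h := mul_dvd_mul ha hb
  rwa [← Nat.cast_mul, Nat.mul_div_cancel' hd] at h

theorem forall_dvd_iff_forall_dvd_sum_divisors_mul_div (c : ℕ → ℤ) :
    (∀ n : ℕ, 0 < n → (n : ℤ) ∣ c n) ↔
      ∀ n : ℕ, 0 < n → (n : ℤ) ∣ ∑ d ∈ n.divisors, c d * (n / d : ℕ) := by
  refine ⟨fun hc n _ => dvd_sum fun d hd => Int.natCast_dvd_mul_of_dvd_of_dvd_div
    (Nat.dvd_of_mem_divisors hd) (hc d (Nat.pos_of_mem_divisors hd)) dvd_rfl, fun hc n => ?_⟩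
  induction n using Nat.strong_induction_on with
  | _ n ih =>
  intro hn
  have hproper : (n : ℤ) ∣ ∑ d ∈ n.properDivisors, c d * (n / d : ℕ) :=
    dvd_sum fun d hd => Int.natCast_dvd_mul_of_dvd_of_dvd_div
      (Nat.mem_properDivisors.mp hd).1
      (ih d (Nat.mem_properDivisors.mp hd).2 (Nat.pos_of_mem_properDivisors hd)) dvd_rfl
  have h := hc n hn
  rw [← Nat.cons_self_properDivisors hn.ne', sum_cons, Nat.div_self hn, Nat.cast_one,
    mul_one] at h
  exact (dvd_add_left hproper).mp h

theorem Int.prime_pow_succ_dvd_pow_pow_sub {p : ℕ} (hp : p.Prime) (a : ℤ) (k : ℕ) :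
    (p : ℤ) ^ (k + 1) ∣ a ^ p ^ (k + 1) - a ^ p ^ k := by
  have := Fact.mk hp
  have hfermat : (p : ℤ) ∣ a ^ p - a := by
    rw [← ZMod.intCast_zmod_eq_zero_iff_dvd]; push_cast; rw [ZMod.pow_card, sub_self]
  simpa [← pow_mul, ← pow_succ'] using dvd_sub_pow_of_dvd_sub hfermat k

theorem ArithmeticFunction.moebius_prime_mul {p d : ℕ} (hp : p.Prime) (hpd : ¬ p ∣ d) :
    μ (p * d) = -μ d := by
  rw [isMultiplicative_moebius.map_mul_of_coprime (hp.coprime_iff_not_dvd.mpr hpd),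
    moebius_apply_prime hp, neg_one_mul]

theorem ArithmeticFunction.moebius_prime_mul_of_dvd {p d : ℕ} (hp : p.Prime) (hpd : p ∣ d) :
    μ (p * d) = 0 :=
  moebius_eq_zero_of_not_squarefree fun hsq =>
    hp.not_isUnit (hsq p (mul_dvd_mul_left p hpd))

theorem ArithmeticFunction.sum_divisors_moebius_mul_eq_sum_not_dvd {R : Type*} [Ring R]
    {p n : ℕ} (hp : p.Prime) (hpn : p ∣ n) (f : ℕ → R) :
    ∑ d ∈ n.divisors, (μ d : R) * f d =
      ∑ d ∈ n.divisors with ¬ p ∣ d, (μ d : R) * (f d - f (p * d)) := by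
  have hmul : ∑ d ∈ n.divisors with p ∣ d, (μ d : R) * f d =
      ∑ d ∈ n.divisors with ¬ p ∣ d, (μ (p * d) : R) * f (p * d) := by
    rw [← sum_image (f := fun e => (μ e : R) * f e)
      (fun a _ b _ h => Nat.eq_of_mul_eq_mul_left hp.pos h)]
    refine (sum_subset ?_ fun d hd hnot => ?_).symm
    · simp only [subset_iff, mem_image, mem_filter, Nat.mem_divisors]
      rintro _ ⟨e, ⟨⟨hen, hn⟩, hpe⟩, rfl⟩
      exact ⟨⟨(Nat.Coprime.mul_dvd_of_dvd_of_dvd ((hp.coprime_iff_not_dvd).mpr hpe) hpn hen),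
        hn⟩, dvd_mul_right p e⟩
    · obtain ⟨⟨hdn, hn⟩, e, rfl⟩ := by simpa only [mem_filter, Nat.mem_divisors] using hd
      have hpe : p ∣ e := by
        by_contra hpe
        exact hnot (mem_image_of_mem _ (mem_filter.mpr
          ⟨Nat.mem_divisors.mpr ⟨(Nat.dvd_mul_left e p).trans hdn, hn⟩, hpe⟩))
      simp [moebius_prime_mul_of_dvd hp hpe]
  rw [← sum_filter_add_sum_filter_not n.divisors (p ∣ ·), hmul, ← sum_add_distrib]
  refine sum_congr rfl fun d hd => ?_
  rw [moebius_prime_mul hp (mem_filter.mp hd).2]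
  push_cast
  noncomm_ring

theorem ArithmeticFunction.prime_pow_dvd_sum_divisors_moebius_mul_pow {p k n : ℕ} (hp : p.Prime)
    (hpk : p ^ (k + 1) ∣ n) (a : ℤ) :
    (p : ℤ) ^ (k + 1) ∣ ∑ d ∈ n.divisors, μ d * a ^ (n / d) := by
  have hpn : p ∣ n := (dvd_pow_self p k.succ_ne_zero).trans hpk
  have hsplit := sum_divisors_moebius_mul_eq_sum_not_dvd hp hpn (fun d => a ^ (n / d))
  simp only [Int.cast_id] at hsplit
  rw [hsplit]
  refine dvd_sum fun d hd => Dvd.dvd.mul_left ?_ _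
  obtain ⟨hdn, hpd⟩ := mem_filter.mp hd
  obtain ⟨m, hm⟩ : p ^ (k + 1) ∣ n / d :=
    (Nat.Coprime.pow_left _ (hp.coprime_iff_not_dvd.mpr hpd)).dvd_of_dvd_mul_left
      (by rwa [Nat.mul_div_cancel' (Nat.dvd_of_mem_divisors hdn)])
  have hpm : n / (p * d) = p ^ k * m := by
    rw [mul_comm p d, ← Nat.div_div_eq_div_mul, hm, pow_succ', mul_assoc,
      Nat.mul_div_cancel_left _ hp.pos]
  simpa only [hm, hpm, pow_mul'] using Int.prime_pow_succ_dvd_pow_pow_sub hp (a ^ m) k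

theorem ArithmeticFunction.dvd_sum_divisors_moebius_mul_pow (n : ℕ) (a : ℤ) :
    (n : ℤ) ∣ ∑ d ∈ n.divisors, μ d * a ^ (n / d) := by
  refine Int.natCast_dvd.mpr <| (Nat.dvd_iff_prime_pow_dvd_dvd _ n).mpr fun p k hp hpk => ?_
  rcases k with _ | k
  · exact pow_zero p ▸ one_dvd _
  · exact Int.natCast_dvd.mp (by
      simpa using prime_pow_dvd_sum_divisors_moebius_mul_pow hp hpk a)

namespace BigWitt

def ghost (x : ℕ → ℤ) (n : ℕ) : ℤ :=
  ∑ d ∈ n.divisors, (d : ℤ) * x d ^ (n / d)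

def moebiusInv (b : ℕ → ℤ) (n : ℕ) : ℤ :=
  ∑ d ∈ n.divisors, μ d * b (n / d)

theorem moebiusInv_ghost (x : ℕ → ℤ) (n : ℕ) :
    moebiusInv (ghost x) n =
      ∑ e ∈ n.divisors, (e : ℤ) * ∑ d ∈ (n / e).divisors, μ d * x e ^ (n / e / d) := by
  simp only [moebiusInv, ghost, mul_sum]
  rw [Nat.sum_divisors_sum_divisors_div_comm]
  refine sum_congr rfl fun e _ => sum_congr rfl fun d _ => ?_
  rw [Nat.div_right_comm n d e]
  ring

theorem dvd_moebiusInv_ghost (x : ℕ → ℤ) (n : ℕ) : (n : ℤ) ∣ moebiusInv (ghost x) n := by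
  rw [moebiusInv_ghost]
  exact dvd_sum fun e he => Int.natCast_dvd_mul_of_dvd_of_dvd_div
    (Nat.dvd_of_mem_divisors he) dvd_rfl (dvd_sum_divisors_moebius_mul_pow _ _)

theorem moebiusInv_sub_moebiusInv {f g : ℕ → ℤ} {n : ℕ} (hn : n ≠ 0)
    (hfg : ∀ m ∈ n.properDivisors, f m = g m) :
    moebiusInv f n - moebiusInv g n = f n - g n := by
  rw [moebiusInv, moebiusInv, ← sum_sub_distrib,
    sum_eq_single_of_mem 1 (Nat.one_mem_divisors.mpr hn) fun d hd hd1 => ?_]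
  · simp
  · have hdn := Nat.dvd_of_mem_divisors hd
    have hd0 := Nat.pos_of_mem_divisors hd
    rw [hfg (n / d) (Nat.mem_properDivisors.mpr ⟨Nat.div_dvd_of_dvd hdn,
      Nat.div_lt_self (Nat.pos_of_ne_zero hn) (by omega)⟩), sub_self]

theorem ghost_eq_sum_properDivisors_add (x : ℕ → ℤ) {n : ℕ} (hn : n ≠ 0) :
    ghost x n = ∑ d ∈ n.properDivisors, (d : ℤ) * x d ^ (n / d) + n * x n := by
  rw [ghost, ← Nat.cons_self_properDivisors hn, sum_cons, add_comm,
    Nat.div_self (Nat.pos_of_ne_zero hn), pow_one]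

-- The division is exact when `n ∣ moebiusInv b n` for all `n`; otherwise `/` rounds.
def ghostPreimage (b : ℕ → ℤ) (n : ℕ) : ℤ :=
  (b n - ∑ d ∈ n.properDivisors.attach, (d : ℤ) * ghostPreimage b d ^ (n / d)) / n
decreasing_by exact (Nat.mem_properDivisors.mp d.2).2

theorem ghostPreimage_eq (b : ℕ → ℤ) (n : ℕ) :
    ghostPreimage b n =
      (b n - ∑ d ∈ n.properDivisors, (d : ℤ) * ghostPreimage b d ^ (n / d)) / n := by
  rw [ghostPreimage, sum_attach n.properDivisors fun d => (d : ℤ) * ghostPreimage b d ^ (n / d)]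

theorem ghost_ghostPreimage {b : ℕ → ℤ} (hb : ∀ n : ℕ, 0 < n → (n : ℤ) ∣ moebiusInv b n) :
    ∀ n : ℕ, 0 < n → ghost (ghostPreimage b) n = b n := by
  intro n
  induction n using Nat.strong_induction_on with
  | _ n ih =>
  intro hn
  set x := ghostPreimage b
  have hdiff := moebiusInv_sub_moebiusInv hn.ne' fun m hm =>
    (ih m (Nat.mem_properDivisors.mp hm).2 (Nat.pos_of_mem_properDivisors hm)).symm
  rw [ghost_eq_sum_properDivisors_add x hn.ne'] at hdiff ⊢
  set S := ∑ d ∈ n.properDivisors, (d : ℤ) * x d ^ (n / d)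
  have hdvd : (n : ℤ) ∣ b n - S := by
    rw [show b n - S = moebiusInv b n - moebiusInv (ghost x) n + n * x n by rw [hdiff]; ring]
    exact dvd_add (dvd_sub (hb n hn) (dvd_moebiusInv_ghost x n)) (dvd_mul_right _ _)
  rw [show x n = (b n - S) / n from ghostPreimage_eq b n, Int.mul_ediv_cancel' hdvd]
  ring

theorem exists_ghost_eq_iff (b : ℕ → ℤ) :
    (∃ x, ∀ n : ℕ, 0 < n → ghost x n = b n) ↔ ∀ n : ℕ, 0 < n → (n : ℤ) ∣ moebiusInv b n := by
  refine ⟨fun ⟨x, hx⟩ n hn => ?_, fun hb => ⟨ghostPreimage b, ghost_ghostPreimage hb⟩⟩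
  have hb : moebiusInv b n = moebiusInv (ghost x) n := sum_congr rfl fun d hd => by
    rw [hx (n / d) (Nat.div_pos (Nat.divisor_le hd) (Nat.pos_of_mem_divisors hd))]
  exact hb ▸ dvd_moebiusInv_ghost x n

theorem sum_divisors_moebiusInv (b : ℕ → ℤ) {n : ℕ} (hn : 0 < n) :
    ∑ d ∈ n.divisors, moebiusInv b d = b n :=
  sum_eq_iff_sum_mul_moebius_eq.mpr (fun m _ => by
    simp only [Int.cast_id]
    exact Nat.sum_divisorsAntidiagonal fun i j => μ i * b j) n hn

theorem sum_Icc_gcd_eq (b : ℕ → ℤ) (n : ℕ) :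
    ∑ i ∈ Icc 1 n, b (i.gcd n) = ∑ d ∈ n.divisors, moebiusInv b d * (n / d : ℕ) := by
  calc ∑ i ∈ Icc 1 n, b (i.gcd n)
      = ∑ i ∈ Icc 1 n, ∑ d ∈ (i.gcd n).divisors, moebiusInv b d :=
        sum_congr rfl fun i hi => (sum_divisors_moebiusInv b
          (Nat.gcd_pos_of_pos_left _ (mem_Icc.mp hi).1)).symm
    _ = ∑ d ∈ n.divisors, ∑ i ∈ Icc 1 n with d ∣ i, moebiusInv b d :=
        sum_comm' fun i d => by
          simp only [mem_Icc, Nat.mem_divisors, mem_filter, Nat.dvd_gcd_iff]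
          constructor
          · rintro ⟨hi, ⟨hdi, hdn⟩, -⟩
            exact ⟨⟨hi, hdi⟩, hdn, by omega⟩
          · rintro ⟨⟨hi, hdi⟩, hdn, hn⟩
            exact ⟨hi, ⟨hdi, hdn⟩, Nat.gcd_ne_zero_right hn⟩
    _ = ∑ d ∈ n.divisors, moebiusInv b d * (n / d : ℕ) := sum_congr rfl fun d _ => by
        rw [sum_const, ← zero_add 1, Icc_add_one_left_eq_Ioc, Nat.Ioc_filter_dvd_card_eq_div,
          nsmul_eq_mul, mul_comm]

end BigWitt

/-- A sequence of integers `b` lies in the image of the ghost map `w : W(ℤ) → ℤ^ℕ` iff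
`Σ_{d∣n} μ(d) b_{n/d} ≡ 0 (mod n)` for all `n ≥ 1`, and equivalently iff
`Σ_{i=1}^n b_{gcd(i,n)} ≡ 0 (mod n)` for all `n ≥ 1`. -/
theorem stmt16 (b : ℕ → ℤ) :
    ((∃ x : ℕ → ℤ, ∀ n : ℕ, 1 ≤ n →
        ∑ d ∈ Nat.divisors n, (d : ℤ) * x d ^ (n / d) = b n) ↔
      ∀ n : ℕ, 1 ≤ n →
        (n : ℤ) ∣ ∑ d ∈ Nat.divisors n, ArithmeticFunction.moebius d * b (n / d)) ∧
    ((∃ x : ℕ → ℤ, ∀ n : ℕ, 1 ≤ n →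
        ∑ d ∈ Nat.divisors n, (d : ℤ) * x d ^ (n / d) = b n) ↔
      ∀ n : ℕ, 1 ≤ n →
        (n : ℤ) ∣ ∑ i ∈ Finset.Icc 1 n, b (Nat.gcd i n)) := by
  have hghost := BigWitt.exists_ghost_eq_iff b
  refine ⟨hghost, hghost.trans ?_⟩
  rw [forall_dvd_iff_forall_dvd_sum_divisors_mul_div]
  simp only [BigWitt.sum_Icc_gcd_eq]
  -- `0 < n` unfolds to `1 ≤ n`
  rfl
end
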